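/- arXiv:2303.15802 — 5 statements merged into one kernel-verified Lean document; each statement's English description precedes it below -/
import Mathlib

section
/- The complete lattice tors A is upper semimodular if and only if every brick in mod A is isomorphic to a simple A-module. -/
/-! Preamble: the category `mod A` of finite-dimensional right `A`-modules,
torsion(-free) classes, the complete lattice `tors A`, functorially finite
torsion classes, bricks, etc. -/

open Function

/-- A bundled finite-dimensional (i.e. finitely generated) right `A`-module,
realized as a left module over `Aᵐᵒᵖ`. -/
structure ModA (A : Type) [Ring A] : Type 1 where
  carrier : Type
  [isAddCommGroup : AddCommGroup carrier]
  [isModule : Module Aᵐᵒᵖ carrier]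
  [isFinite : Module.Finite Aᵐᵒᵖ carrier]

attribute [instance] ModA.isAddCommGroup ModA.isModule ModA.isFinite

namespace ModA

variable {A : Type} [Ring A]

instance : CoeSort (ModA A) Type := ⟨ModA.carrier⟩

end ModA

section TorsionTheory

variable {A : Type} [Ring A]

/-- A torsion class: a class of finite-dimensional right `A`-modules containing the
zero modules, closed under quotient modules and under extensions. -/
def IsTorsionClass (T : Set (ModA A)) : Prop :=
  (∀ N : ModA A, Subsingleton N.carrier → N ∈ T) ∧
  (∀ M N : ModA A, M ∈ T → ∀ f : M.carrier →ₗ[Aᵐᵒᵖ] N.carrier, Surjective f → N ∈ T) ∧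
  (∀ (X Y Z : ModA A) (f : X.carrier →ₗ[Aᵐᵒᵖ] Y.carrier) (g : Y.carrier →ₗ[Aᵐᵒᵖ] Z.carrier),
    Injective f → Surjective g → LinearMap.range f = LinearMap.ker g →
    X ∈ T → Z ∈ T → Y ∈ T)

/-- A torsion-free class: a class of finite-dimensional right `A`-modules containing the
zero modules, closed under submodules and under extensions. -/
def IsTorsionFreeClass (F : Set (ModA A)) : Prop :=
  (∀ N : ModA A, Subsingleton N.carrier → N ∈ F) ∧
  (∀ M N : ModA A, M ∈ F → ∀ f : N.carrier →ₗ[Aᵐᵒᵖ] M.carrier, Injective f → N ∈ F) ∧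
  (∀ (X Y Z : ModA A) (f : X.carrier →ₗ[Aᵐᵒᵖ] Y.carrier) (g : Y.carrier →ₗ[Aᵐᵒᵖ] Z.carrier),
    Injective f → Surjective g → LinearMap.range f = LinearMap.ker g →
    X ∈ F → Z ∈ F → Y ∈ F)

theorem isTorsionClass_sInter {S : Set (Set (ModA A))} (h : ∀ T ∈ S, IsTorsionClass T) :
    IsTorsionClass (⋂₀ S) := by
  refine ⟨fun N hN => ?_, fun M N hM f hf => ?_, fun X Y Z f g hf hg he hX hZ => ?_⟩
  · exact Set.mem_sInter.2 fun T hT => (h T hT).1 N hN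
  · exact Set.mem_sInter.2 fun T hT => (h T hT).2.1 M N (Set.mem_sInter.1 hM T hT) f hf
  · exact Set.mem_sInter.2 fun T hT =>
      (h T hT).2.2 X Y Z f g hf hg he (Set.mem_sInter.1 hX T hT) (Set.mem_sInter.1 hZ T hT)

theorem isTorsionFreeClass_sInter {S : Set (Set (ModA A))} (h : ∀ F ∈ S, IsTorsionFreeClass F) :
    IsTorsionFreeClass (⋂₀ S) := by
  refine ⟨fun N hN => ?_, fun M N hM f hf => ?_, fun X Y Z f g hf hg he hX hZ => ?_⟩
  · exact Set.mem_sInter.2 fun T hT => (h T hT).1 N hN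
  · exact Set.mem_sInter.2 fun T hT => (h T hT).2.1 M N (Set.mem_sInter.1 hM T hT) f hf
  · exact Set.mem_sInter.2 fun T hT =>
      (h T hT).2.2 X Y Z f g hf hg he (Set.mem_sInter.1 hX T hT) (Set.mem_sInter.1 hZ T hT)

end TorsionTheory

/-- `tors A`: the poset of all torsion classes in `mod A`, ordered by inclusion. -/
def Tors (A : Type) [Ring A] : Type 1 := {T : Set (ModA A) // IsTorsionClass T}

/-- `torf A`: the poset of all torsion-free classes in `mod A`, ordered by inclusion. -/
def Torf (A : Type) [Ring A] : Type 1 := {F : Set (ModA A) // IsTorsionFreeClass F}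

namespace Tors

variable {A : Type} [Ring A]

instance : PartialOrder (Tors A) := Subtype.partialOrder _

instance : InfSet (Tors A) :=
  ⟨fun S => ⟨⋂₀ (Subtype.val '' S),
    isTorsionClass_sInter (by rintro _ ⟨T, _, rfl⟩; exact T.2)⟩⟩

/-- `tors A` is a complete lattice, with meets given by intersections. -/
instance : CompleteLattice (Tors A) :=
  completeLatticeOfInf _ (fun S =>
    ⟨fun T hT => Set.sInter_subset_of_mem ⟨T, hT, rfl⟩,
     fun L hL => Set.subset_sInter (by rintro _ ⟨T, hT, rfl⟩; exact hL hT)⟩)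

end Tors

namespace Torf

variable {A : Type} [Ring A]

instance : PartialOrder (Torf A) := Subtype.partialOrder _

instance : InfSet (Torf A) :=
  ⟨fun S => ⟨⋂₀ (Subtype.val '' S),
    isTorsionFreeClass_sInter (by rintro _ ⟨T, _, rfl⟩; exact T.2)⟩⟩

/-- `torf A` is a complete lattice, with meets given by intersections. -/
instance : CompleteLattice (Torf A) :=
  completeLatticeOfInf _ (fun S =>
    ⟨fun T hT => Set.sInter_subset_of_mem ⟨T, hT, rfl⟩,
     fun L hL => Set.subset_sInter (by rintro _ ⟨T, hT, rfl⟩; exact hL hT)⟩)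

end Torf

section Defs

variable {A : Type} [Ring A]

/-- `T(C)`: the smallest torsion class containing the class `C` of modules. -/
def torsGen (C : Set (ModA A)) : Tors A := sInf {T : Tors A | C ⊆ T.1}

/-- `Fac M`: the class of all quotients of finite direct sums of copies of `M`. -/
def Fac (M : ModA A) : Set (ModA A) :=
  {N | ∃ (k : ℕ) (f : (Fin k → M.carrier) →ₗ[Aᵐᵒᵖ] N.carrier), Surjective f}

/-- A class of modules is functorially finite (as a torsion class) when it is
of the form `Fac M`. -/
def IsFFSet (X : Set (ModA A)) : Prop := ∃ M : ModA A, X = Fac M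

/-- A torsion class is functorially finite when it is of the form `Fac M`. -/
def IsFunctoriallyFinite (T : Tors A) : Prop := IsFFSet T.1

/-- The right Hom-orthogonal class `X^⊥`. -/
def rightPerp (X : Set (ModA A)) : Set (ModA A) :=
  {M | ∀ N ∈ X, ∀ f : N.carrier →ₗ[Aᵐᵒᵖ] M.carrier, f = 0}

/-- The left Hom-orthogonal class `^⊥X`. -/
def leftPerp (X : Set (ModA A)) : Set (ModA A) :=
  {N | ∀ M ∈ X, ∀ f : N.carrier →ₗ[Aᵐᵒᵖ] M.carrier, f = 0}

/-- A brick: a nonzero module all of whose nonzero endomorphisms are isomorphisms. -/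
def IsBrick (B : ModA A) : Prop :=
  Nontrivial B.carrier ∧
    ∀ f : B.carrier →ₗ[Aᵐᵒᵖ] B.carrier, f ≠ 0 → Bijective f

end Defs

/-- `f-tors A`: the poset of functorially finite torsion classes, ordered by inclusion. -/
def FTors (A : Type) [Ring A] : Type 1 := {T : Tors A // IsFunctoriallyFinite T}

instance {A : Type} [Ring A] : PartialOrder (FTors A) := Subtype.partialOrder _

section Simples

variable (A : Type) [Ring A]

/-- The type of simple objects of `mod A`. -/
def SimpleMod : Type 1 := {S : ModA A // IsSimpleModule Aᵐᵒᵖ S.carrier}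

/-- Isomorphism of simple modules, as an equivalence relation. -/
def simpleIsoSetoid : Setoid (SimpleMod A) where
  r S T := Nonempty (S.1.carrier ≃ₗ[Aᵐᵒᵖ] T.1.carrier)
  iseqv := ⟨fun _ => ⟨LinearEquiv.refl _ _⟩, fun ⟨e⟩ => ⟨e.symm⟩, fun ⟨e⟩ ⟨f⟩ => ⟨e.trans f⟩⟩

/-- The number of isomorphism classes of simple right `A`-modules. -/
noncomputable def numSimples : ℕ := Nat.card (Quotient (simpleIsoSetoid A))

end Simples

section Lattice

/-- Upper semimodularity: if `a` and `b` both cover `a ⊓ b`, then `a ⊔ b` covers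
both `a` and `b`. -/
def UpperSemimodular (α : Type*) [Lattice α] : Prop :=
  ∀ a b : α, a ⊓ b ⋖ a → a ⊓ b ⋖ b → a ⋖ a ⊔ b ∧ b ⋖ a ⊔ b

/-- Lower semimodularity: if `a ⊔ b` covers both `a` and `b`, then `a` and `b` both
cover `a ⊓ b`. -/
def LowerSemimodular (α : Type*) [Lattice α] : Prop :=
  ∀ a b : α, a ⋖ a ⊔ b → b ⋖ a ⊔ b → a ⊓ b ⋖ a ∧ a ⊓ b ⋖ b

/-- An element `x` of a complete lattice is completely join irreducible if the join of
all elements strictly below `x` is strictly below `x`. -/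
def CompletelyJoinIrred {α : Type*} [CompleteLattice α] (x : α) : Prop :=
  sSup {y | y < x} < x

end Lattice

/-- The statement that the poset `f-tors A` forms a lattice: any two functorially finite
torsion classes have a least upper bound and a greatest lower bound within `f-tors A`. -/
def FTorsIsLattice (A : Type) [Ring A] : Prop :=
  ∀ a b : FTors A, (∃ m, IsGLB {a, b} m) ∧ (∃ j, IsLUB {a, b} j)

/-- Upper semimodularity for the poset `f-tors A`. -/
def FTorsUpperSemimodular (A : Type) [Ring A] : Prop :=
  ∀ a b m j : FTors A, IsGLB {a, b} m → IsLUB {a, b} j →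
    m ⋖ a → m ⋖ b → a ⋖ j ∧ b ⋖ j

/-- Lower semimodularity for the poset `f-tors A`. -/
def FTorsLowerSemimodular (A : Type) [Ring A] : Prop :=
  ∀ a b m j : FTors A, IsGLB {a, b} m → IsLUB {a, b} j →
    a ⋖ j → b ⋖ j → m ⋖ a ∧ m ⋖ b

/-- A realization of a `K`-algebra `A` as a finite product of finite-dimensional
local `K`-algebras. -/
structure LocalAlgebraFactorization (K : Type) [Field K] (A : Type) [Ring A] [Algebra K A] where
  m : ℕ
  B : Fin m → Type
  [ringB : ∀ i, Ring (B i)]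
  [algB : ∀ i, Algebra K (B i)]
  finB : ∀ i, FiniteDimensional K (B i)
  localB : ∀ i, IsLocalRing (B i)
  equiv : A ≃ₐ[K] ∀ i, B i

/-- An indecomposable module: nonzero, and not the internal direct sum of two nonzero
submodules. -/
def IsIndecomposableModule (R M : Type*) [Ring R] [AddCommGroup M] [Module R M] : Prop :=
  Nontrivial M ∧ ∀ S T : Submodule R M, IsCompl S T → S = ⊥ ∨ T = ⊥

/-!
Both sides are equivalent to: every extension `0 → X → Y → Z → 0` of non-isomorphic simple
modules splits.

If such an extension does not split, the only submodules of `Y` are `0`, `X` and `Y`. Hence `Y` is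
a brick that is not simple, and `Y` also breaks upper semimodularity: `a = Filt Z` and
`b = Filt X` both cover `a ⊓ b = 0`, while the modules of `a ⊔ b` whose simple quotients are all
isomorphic to `Z` form a torsion class strictly between `a` and `a ⊔ b` (it contains `Y`, not `X`).

Conversely, if all these extensions split, every simple subquotient of a module is a quotient of
it. So a brick maps onto a simple submodule of itself and must be simple; and a torsion class is
determined by the simple modules it contains, so `tors A` is isomorphic to the Boolean lattice of
sets of isoclasses of simple modules, which is upper semimodular.
-/

section Lattice

variable {α β : Type*}

theorem eq_bot_or_eq_or_eq_top_of_isAtom_of_isCoatom [Lattice α] [BoundedOrder α] {a : α}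
    (ha : IsAtom a) (ha' : IsCoatom a) (hno : ∀ b, ¬IsCompl a b) (b : α) :
    b = ⊥ ∨ b = a ∨ b = ⊤ := by
  rcases ha.le_iff.mp (inf_le_right : b ⊓ a ≤ a) with h | h
  · rcases ha'.le_iff.mp (le_sup_left : a ≤ a ⊔ b) with h' | h'
    · exact absurd ⟨disjoint_iff.mpr (inf_comm b a ▸ h), codisjoint_iff.mpr h'⟩ (hno b)
    · left
      rw [← h, inf_eq_left.mpr (sup_eq_left.mp h')]
  · rcases ha'.le_iff.mp (inf_eq_right.mp h) with h' | h'
    · exact Or.inr (Or.inr h')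
    · exact Or.inr (Or.inl h')

theorem IsCoatom.eq_of_isAtom_of_forall_not_isCompl [Lattice α] [BoundedOrder α] {a b : α}
    (hb : IsCoatom b) (ha : IsAtom a) (ha' : IsCoatom a) (hno : ∀ c, ¬IsCompl a c) : b = a := by
  rcases eq_bot_or_eq_or_eq_top_of_isAtom_of_isCoatom ha ha' hno b with rfl | h | rfl
  · exact absurd (hb.lt_iff.mp ha.bot_lt) ha'.1
  · exact h
  · exact absurd rfl hb.1

theorem upperSemimodular_of_orderIso [Lattice α] [Lattice β] [IsWeakUpperModularLattice β]
    (e : α ≃o β) : UpperSemimodular α := by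
  intro a b ha hb
  rw [← apply_covBy_apply_iff e, e.map_inf] at ha hb
  simp only [← apply_covBy_apply_iff e, e.map_sup]
  exact ⟨ha.sup_of_inf_of_inf_left hb, ha.sup_of_inf_of_inf_right hb⟩

end Lattice

section Modules

variable {R M N P : Type*} [Ring R] [AddCommGroup M] [Module R M] [AddCommGroup N] [Module R N]
  [AddCommGroup P] [Module R P]

theorem LinearMap.exists_comp_eq_of_ker_le {e : M →ₗ[R] N} (he : Surjective e) {u : M →ₗ[R] P}
    (h : LinearMap.ker e ≤ LinearMap.ker u) : ∃ v : N →ₗ[R] P, v ∘ₗ e = u :=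
  ⟨(LinearMap.ker e).liftQ u h ∘ₗ (e.quotKerEquivOfSurjective he).symm.toLinearMap, by
    ext x
    simp⟩

variable (R) in
def IsSubquotient (S M : Type*) [AddCommGroup S] [Module R S] [AddCommGroup M] [Module R M] :
    Prop :=
  ∃ (L : Submodule R M) (u : L →ₗ[R] S), Surjective u

variable {S : Type*} [AddCommGroup S] [Module R S]

theorem isSubquotient_of_surjective {u : M →ₗ[R] S} (hu : Surjective u) : IsSubquotient R S M :=
  ⟨⊤, u ∘ₗ (⊤ : Submodule R M).subtype, fun s => (hu s).elim fun x hx => ⟨⟨x, trivial⟩, hx⟩⟩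

theorem IsSubquotient.of_injective {j : M →ₗ[R] N} (hj : Injective j)
    (h : IsSubquotient R S M) : IsSubquotient R S N := by
  obtain ⟨L, u, hu⟩ := h
  let e := Submodule.equivMapOfInjective j hj L
  exact ⟨L.map j, u ∘ₗ e.symm.toLinearMap, hu.comp e.symm.surjective⟩

theorem IsSubquotient.of_surjective {g : M →ₗ[R] N} (hg : Surjective g)
    (h : IsSubquotient R S N) : IsSubquotient R S M := by
  obtain ⟨L, u, hu⟩ := h
  refine ⟨L.comap g, u ∘ₗ g.restrict fun _ hx => hx, hu.comp fun y => ?_⟩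
  obtain ⟨x, hx⟩ := hg y
  exact ⟨⟨x, by simp [hx]⟩, Subtype.ext hx⟩

theorem IsSubquotient.of_le {L L' : Submodule R M} (hLL' : L ≤ L') {u : L →ₗ[R] S}
    (hu : Surjective u) : IsSubquotient R S L' :=
  ⟨L.comap L'.subtype, u ∘ₗ (Submodule.comapSubtypeEquivOfLe hLL').toLinearMap,
    hu.comp (Submodule.comapSubtypeEquivOfLe hLL').surjective⟩

theorem IsSubquotient.nontrivial [Nontrivial S] (h : IsSubquotient R S M) : Nontrivial M := by
  obtain ⟨L, u, hu⟩ := h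
  have := hu.nontrivial
  exact L.injective_subtype.nontrivial

theorem IsSubquotient.nonempty_linearEquiv [IsSimpleModule R S] [IsSimpleModule R M]
    (h : IsSubquotient R S M) : Nonempty (S ≃ₗ[R] M) := by
  obtain ⟨L, u, hu⟩ := h
  have := IsSimpleModule.nontrivial R S
  have := hu.nontrivial
  have hL : L = ⊤ := (eq_bot_or_eq_top L).resolve_left (Submodule.nontrivial_iff_ne_bot.mp this)
  let v := u ∘ₗ (LinearEquiv.ofTop L hL).symm.toLinearMap
  have hv : Surjective v := hu.comp (LinearEquiv.ofTop L hL).symm.surjective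
  exact ⟨(LinearEquiv.ofBijective v
    (LinearMap.bijective_of_ne_zero (LinearMap.ne_zero_of_surjective hv))).symm⟩

theorem IsSubquotient.of_exact [IsSimpleModule R S] {f : M →ₗ[R] N} {g : N →ₗ[R] P}
    (hfg : LinearMap.range f = LinearMap.ker g) (h : IsSubquotient R S N) :
    IsSubquotient R S M ∨ IsSubquotient R S P := by
  obtain ⟨L, u, hu⟩ := h
  rcases eq_bot_or_eq_top (((LinearMap.range f).comap L.subtype).map u) with hI | hI
  · right
    have hker : LinearMap.ker (g.submoduleMap L) ≤ LinearMap.ker u := fun x hx => by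
      have hx : (x : N) ∈ LinearMap.range f := by
        simpa [hfg, Subtype.ext_iff, LinearMap.submoduleMap_coe_apply] using hx
      simpa [hI] using
        Submodule.mem_map_of_mem (f := u) (show x ∈ (LinearMap.range f).comap L.subtype from hx)
    obtain ⟨v, hv⟩ := LinearMap.exists_comp_eq_of_ker_le (g.submoduleMap_surjective L) hker
    exact ⟨L.map g, v, Surjective.of_comp (hv ▸ hu)⟩
  · left
    refine ⟨L.comap f, u ∘ₗ f.restrict fun _ hx => hx, fun s => ?_⟩
    obtain ⟨x, ⟨m, hm⟩, rfl⟩ := (Submodule.eq_top_iff'.mp hI) s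
    exact ⟨⟨m, by simp [hm]⟩, congrArg u (Subtype.ext hm)⟩

end Modules

section TorsionClasses

variable {A : Type} [Ring A]

namespace Tors

theorem mem_of_subsingleton (T : Tors A) {M : ModA A} (hM : Subsingleton M.carrier) : M ∈ T.1 :=
  T.2.1 M hM

theorem mem_of_surjective (T : Tors A) {M N : ModA A} (hM : M ∈ T.1)
    {f : M.carrier →ₗ[Aᵐᵒᵖ] N.carrier} (hf : Surjective f) : N ∈ T.1 :=
  T.2.2.1 M N hM f hf

theorem mem_of_linearEquiv (T : Tors A) {M N : ModA A} (hM : M ∈ T.1)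
    (e : M.carrier ≃ₗ[Aᵐᵒᵖ] N.carrier) : N ∈ T.1 :=
  T.mem_of_surjective hM e.surjective

theorem mem_of_exact (T : Tors A) {X Y Z : ModA A} {f : X.carrier →ₗ[Aᵐᵒᵖ] Y.carrier}
    {g : Y.carrier →ₗ[Aᵐᵒᵖ] Z.carrier} (hf : Injective f) (hg : Surjective g)
    (hfg : LinearMap.range f = LinearMap.ker g) (hX : X ∈ T.1) (hZ : Z ∈ T.1) : Y ∈ T.1 :=
  T.2.2.2 X Y Z f g hf hg hfg hX hZ

theorem mem_inf {T T' : Tors A} {M : ModA A} : M ∈ (T ⊓ T').1 ↔ M ∈ T.1 ∧ M ∈ T'.1 := by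
  refine ⟨fun h => ⟨inf_le_left (a := T) (b := T') h, inf_le_right (a := T) (b := T') h⟩, ?_⟩
  rintro ⟨h, h'⟩
  change M ∈ ⋂₀ (Subtype.val '' {T, T'})
  rintro _ ⟨_, rfl | rfl, rfl⟩ <;> assumption

theorem ext {T T' : Tors A} (h : ∀ M, M ∈ T.1 ↔ M ∈ T'.1) : T = T' :=
  Subtype.ext (Set.ext h)

end Tors

theorem ModA.induction_on_proper_submodules [IsArtinianRing Aᵐᵒᵖ] {P : ModA A → Prop}
    (h : ∀ M : ModA A, (∀ W : Submodule Aᵐᵒᵖ M.carrier, W ≠ ⊤ → P ⟨W⟩) → P M) (M : ModA A) :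
    P M := by
  induction hn : Module.length Aᵐᵒᵖ M.carrier using WellFoundedLT.induction generalizing M with
  | ind n ih => exact h M fun W hW => ih _ (hn ▸ Submodule.length_lt hW) _ rfl

abbrev SimpleClass (A : Type) [Ring A] : Type 1 := Quotient (simpleIsoSetoid A)

instance (S : SimpleMod A) : IsSimpleModule Aᵐᵒᵖ S.1.carrier := S.2

def SimpleMod.isoClass (S : SimpleMod A) : SimpleClass A := Quotient.mk _ S

theorem SimpleMod.isoClass_eq_isoClass {S S' : SimpleMod A} :
    S.isoClass = S'.isoClass ↔ Nonempty (S.1.carrier ≃ₗ[Aᵐᵒᵖ] S'.1.carrier) :=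
  Quotient.eq

theorem SimpleMod.isoClass_surjective : Surjective (SimpleMod.isoClass (A := A)) :=
  Quotient.mk_surjective

def simpleClasses (T : Tors A) : Set (SimpleClass A) :=
  {q | ∃ S : SimpleMod A, S.isoClass = q ∧ S.1 ∈ T.1}

theorem isoClass_mem_simpleClasses {T : Tors A} {S : SimpleMod A} :
    S.isoClass ∈ simpleClasses T ↔ S.1 ∈ T.1 :=
  ⟨fun ⟨_, hS', hT⟩ => T.mem_of_linearEquiv hT (SimpleMod.isoClass_eq_isoClass.mp hS').some,
    fun h => ⟨S, rfl, h⟩⟩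

theorem isTorsionClass_setOf_isSubquotient (σ : Set (SimpleClass A)) :
    IsTorsionClass {M : ModA A | ∀ S : SimpleMod A, IsSubquotient Aᵐᵒᵖ S.1.carrier M.carrier →
      S.isoClass ∈ σ} := by
  refine ⟨fun N hN S hS => ?_, fun M N hM f hf S hS => hM S (hS.of_surjective hf),
    fun X Y Z f g hf hg hfg hX hZ S hS => (hS.of_exact hfg).elim (hX S) (hZ S)⟩
  have := IsSimpleModule.nontrivial Aᵐᵒᵖ S.1.carrier
  exact absurd hS.nontrivial (not_nontrivial_iff_subsingleton.mpr hN)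

def filt (σ : Set (SimpleClass A)) : Tors A :=
  ⟨{M | ∀ S : SimpleMod A, IsSubquotient Aᵐᵒᵖ S.1.carrier M.carrier → S.isoClass ∈ σ},
    isTorsionClass_setOf_isSubquotient σ⟩

theorem mem_filt_simpleMod {σ : Set (SimpleClass A)} {S : SimpleMod A} :
    S.1 ∈ (filt σ).1 ↔ S.isoClass ∈ σ :=
  ⟨fun h => h S (isSubquotient_of_surjective (u := LinearMap.id) surjective_id), fun h _ hS' =>
    (SimpleMod.isoClass_eq_isoClass.mpr hS'.nonempty_linearEquiv) ▸ h⟩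

theorem simpleClasses_filt (σ : Set (SimpleClass A)) : simpleClasses (filt σ) = σ := by
  ext q
  obtain ⟨S, rfl⟩ := SimpleMod.isoClass_surjective q
  rw [isoClass_mem_simpleClasses, mem_filt_simpleMod]

theorem isTorsionClass_setOf_surjective (σ : Set (SimpleClass A)) :
    IsTorsionClass {M : ModA A | ∀ S : SimpleMod A,
      (∃ φ : M.carrier →ₗ[Aᵐᵒᵖ] S.1.carrier, Surjective φ) → S.isoClass ∈ σ} := by
  refine ⟨fun N hN S ⟨φ, hφ⟩ => ?_, fun M N hM f hf S ⟨φ, hφ⟩ => hM S ⟨φ ∘ₗ f, hφ.comp hf⟩,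
    fun X Y Z f g hf hg hfg hX hZ S ⟨φ, hφ⟩ => ?_⟩
  · have := IsSimpleModule.nontrivial Aᵐᵒᵖ S.1.carrier
    exact absurd hφ.nontrivial (not_nontrivial_iff_subsingleton.mpr hN)
  · rcases eq_bot_or_eq_top (LinearMap.range (φ ∘ₗ f)) with h | h
    · have hker : LinearMap.ker g ≤ LinearMap.ker φ := by
        rw [← hfg, LinearMap.range_le_ker_iff, ← LinearMap.range_eq_bot, h]
      obtain ⟨v, rfl⟩ := LinearMap.exists_comp_eq_of_ker_le hg hker
      exact hZ S ⟨v, Surjective.of_comp (f := ⇑v) (g := ⇑g) hφ⟩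
    · exact hX S ⟨φ ∘ₗ f, LinearMap.range_eq_top.mp h⟩

def topIn (σ : Set (SimpleClass A)) : Tors A :=
  ⟨{M | ∀ S : SimpleMod A, (∃ φ : M.carrier →ₗ[Aᵐᵒᵖ] S.1.carrier, Surjective φ) → S.isoClass ∈ σ},
    isTorsionClass_setOf_surjective σ⟩

theorem filt_le_topIn (σ : Set (SimpleClass A)) : filt σ ≤ topIn σ :=
  fun _ hM S ⟨_, hφ⟩ => hM S (isSubquotient_of_surjective hφ)

theorem filt_inter (σ τ : Set (SimpleClass A)) : filt (σ ∩ τ) = filt σ ⊓ filt τ :=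
  Tors.ext fun _ => by
    rw [Tors.mem_inf]
    exact forall₂_and

section Artinian

variable [IsArtinianRing Aᵐᵒᵖ]

theorem gc_filt_simpleClasses :
    GaloisConnection (filt (A := A)) simpleClasses := by
  refine fun σ T => ⟨fun h q hq => ?_, fun h => ?_⟩
  · obtain ⟨S, rfl⟩ := SimpleMod.isoClass_surjective q
    exact isoClass_mem_simpleClasses.mpr (h (mem_filt_simpleMod.mpr hq))
  · intro M
    induction M using ModA.induction_on_proper_submodules with
    | h M ih =>
    intro hM
    rcases subsingleton_or_nontrivial M.carrier with hM0 | hM0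
    · exact T.mem_of_subsingleton hM0
    obtain ⟨W, hW⟩ := IsCoatomic.exists_coatom (Submodule Aᵐᵒᵖ M.carrier)
    have := isSimpleModule_iff_isCoatom.mpr hW
    have hWT : (⟨W⟩ : ModA A) ∈ T.1 :=
      ih W hW.1 fun S hS => hM S (hS.of_injective W.injective_subtype)
    have hQT : (⟨M.carrier ⧸ W⟩ : ModA A) ∈ T.1 :=
      isoClass_mem_simpleClasses.mp
        (h (hM ⟨⟨M.carrier ⧸ W⟩, this⟩ (isSubquotient_of_surjective W.mkQ_surjective)))
    exact T.mem_of_exact W.injective_subtype W.mkQ_surjective (by simp) hWT hQT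

theorem filt_empty : filt (∅ : Set (SimpleClass A)) = ⊥ :=
  (gc_filt_simpleClasses (A := A)).l_bot

theorem Tors.exists_simpleMod_mem {T : Tors A} (hT : T ≠ ⊥) : ∃ S : SimpleMod A, S.1 ∈ T.1 := by
  obtain ⟨M, hMT, hM⟩ : ∃ M ∈ T.1, M ∉ (filt (∅ : Set (SimpleClass A))).1 := by
    by_contra! h
    exact hT (le_bot_iff.mp (filt_empty (A := A) ▸ h))
  have : Nontrivial M.carrier :=
    not_subsingleton_iff_nontrivial.mp fun h => hM ((filt ∅).mem_of_subsingleton h)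
  obtain ⟨W, hW⟩ := IsCoatomic.exists_coatom (Submodule Aᵐᵒᵖ M.carrier)
  exact ⟨⟨⟨M.carrier ⧸ W⟩, isSimpleModule_iff_isCoatom.mpr hW⟩,
    T.mem_of_surjective hMT W.mkQ_surjective⟩

theorem isAtom_filt_singleton (q : SimpleClass A) : IsAtom (filt {q}) := by
  refine ⟨fun h => Set.singleton_ne_empty q ?_, fun T hT => by_contra fun hT0 => hT.not_ge ?_⟩
  · rw [← simpleClasses_filt {q}, h, ← filt_empty, simpleClasses_filt]
  · obtain ⟨S, hS⟩ := Tors.exists_simpleMod_mem hT0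
    have hSq : S.isoClass = q := mem_filt_simpleMod.mp (hT.le hS)
    exact gc_filt_simpleClasses.l_le
      (Set.singleton_subset_iff.mpr (hSq ▸ isoClass_mem_simpleClasses.mpr hS))

end Artinian

variable (A) in
/-- `IsAtom U` and `IsCoatom U` say that `U` and `Y ⧸ U` are simple. -/
def NonisoSimpleExtensionsSplit : Prop :=
  ∀ (Y : ModA A) (U : Submodule Aᵐᵒᵖ Y.carrier), IsAtom U → IsCoatom U →
    IsEmpty (U ≃ₗ[Aᵐᵒᵖ] Y.carrier ⧸ U) → ∃ C, IsCompl U C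

theorem NonisoSimpleExtensionsSplit.exists_surjective_of_isCoatom
    (hsplit : NonisoSimpleExtensionsSplit A) {M : ModA A} {S : Type*} [AddCommGroup S]
    [Module Aᵐᵒᵖ S] [IsSimpleModule Aᵐᵒᵖ S] {W : Submodule Aᵐᵒᵖ M.carrier} (hW : IsCoatom W)
    {ψ : W →ₗ[Aᵐᵒᵖ] S} (hψ : Surjective ψ) : ∃ φ : M.carrier →ₗ[Aᵐᵒᵖ] S, Surjective φ := by
  -- Push out along `ψ`: in `M ⧸ K`, `K = ker ψ`, the submodule `U = W ⧸ K ≅ S` has the simple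
  -- quotient `M ⧸ W`; unless `S ≅ M ⧸ W`, the hypothesis makes `U` a direct summand.
  have : IsSimpleModule Aᵐᵒᵖ (M.carrier ⧸ W) := isSimpleModule_iff_isCoatom.mpr hW
  by_cases hiso : Nonempty (S ≃ₗ[Aᵐᵒᵖ] M.carrier ⧸ W)
  · obtain ⟨e⟩ := hiso
    exact ⟨e.symm ∘ₗ W.mkQ, e.symm.surjective.comp W.mkQ_surjective⟩
  let K := (LinearMap.ker ψ).map W.subtype
  have hKW : K ≤ W := Submodule.map_subtype_le _ _
  let U := W.map K.mkQ
  have hker : LinearMap.ker (K.mkQ ∘ₗ W.subtype) = LinearMap.ker ψ := by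
    rw [LinearMap.ker_comp, Submodule.ker_mkQ,
      Submodule.comap_map_eq_of_injective W.injective_subtype]
  have eU : U ≃ₗ[Aᵐᵒᵖ] S :=
    (LinearEquiv.ofEq _ _ (by rw [LinearMap.range_comp, Submodule.range_subtype])).trans
      ((K.mkQ ∘ₗ W.subtype).quotKerEquivRange.symm.trans
        ((Submodule.quotEquivOfEq _ _ hker).trans (ψ.quotKerEquivOfSurjective hψ)))
  let eQ := Submodule.quotientQuotientEquivQuotient K W hKW
  obtain ⟨C, hC⟩ := hsplit ⟨M.carrier ⧸ K⟩ U
    (isSimpleModule_iff_isAtom.mp (IsSimpleModule.congr eU))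
    (isSimpleModule_iff_isCoatom.mp (IsSimpleModule.congr eQ))
    ⟨fun e => hiso ⟨eU.symm.trans (e.trans eQ)⟩⟩
  exact ⟨eU ∘ₗ U.projectionOnto C hC ∘ₗ K.mkQ,
    eU.surjective.comp ((Submodule.projectionOnto_surjective hC).comp K.mkQ_surjective)⟩

section Artinian

variable [IsArtinianRing Aᵐᵒᵖ]

theorem isBrick_of_forall_not_isCompl {Y : ModA A} {U : Submodule Aᵐᵒᵖ Y.carrier} (hU : IsAtom U)
    (hU' : IsCoatom U) (hiso : IsEmpty (U ≃ₗ[Aᵐᵒᵖ] Y.carrier ⧸ U)) (hns : ∀ C, ¬IsCompl U C) :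
    IsBrick Y := by
  have hsub := eq_bot_or_eq_or_eq_top_of_isAtom_of_isCoatom hU hU' hns
  refine ⟨(Submodule.nontrivial_iff Aᵐᵒᵖ).mp ⟨U, ⊥, hU.1⟩, fun e he => ?_⟩
  rcases hsub (LinearMap.ker e) with hk | hk | hk
  · exact IsArtinian.bijective_of_injective_endomorphism e (LinearMap.ker_eq_bot.mp hk)
  · have eQ : (Y.carrier ⧸ U) ≃ₗ[Aᵐᵒᵖ] LinearMap.range e :=
      (Submodule.quotEquivOfEq _ _ hk.symm).trans e.quotKerEquivRange
    exfalso
    rcases hsub (LinearMap.range e) with hr | hr | hr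
    · exact he (LinearMap.range_eq_bot.mp hr)
    · exact hiso.false ((LinearEquiv.ofEq _ _ hr.symm).trans eQ.symm)
    · have := IsNoetherian.injective_of_surjective_endomorphism e (LinearMap.range_eq_top.mp hr)
      exact hU.1 (hk ▸ LinearMap.ker_eq_bot.mpr this)
  · exact absurd (LinearMap.ker_eq_top.mp hk) he

theorem nonisoSimpleExtensionsSplit_of_forall_isBrick
    (h : ∀ B : ModA A, IsBrick B → ∃ S : ModA A, IsSimpleModule Aᵐᵒᵖ S.carrier ∧
      Nonempty (B.carrier ≃ₗ[Aᵐᵒᵖ] S.carrier)) :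
    NonisoSimpleExtensionsSplit A := by
  intro Y U hU hU' hiso
  by_contra! hns
  obtain ⟨S, hS, ⟨e⟩⟩ := h Y (isBrick_of_forall_not_isCompl hU hU' hiso hns)
  have : IsSimpleModule Aᵐᵒᵖ Y.carrier := IsSimpleModule.congr e
  exact (eq_bot_or_eq_top U).elim hU.1 hU'.1

theorem NonisoSimpleExtensionsSplit.exists_surjective_of_isSubquotient
    (hsplit : NonisoSimpleExtensionsSplit A) {S : Type*} [AddCommGroup S] [Module Aᵐᵒᵖ S]
    [IsSimpleModule Aᵐᵒᵖ S] (M : ModA A) :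
    IsSubquotient Aᵐᵒᵖ S M.carrier → ∃ φ : M.carrier →ₗ[Aᵐᵒᵖ] S, Surjective φ := by
  induction M using ModA.induction_on_proper_submodules with
  | h M ih =>
  rintro ⟨L, u, hu⟩
  rcases IsCoatomic.eq_top_or_exists_le_coatom L with rfl | ⟨W, hW, hLW⟩
  · exact ⟨u ∘ₗ Submodule.topEquiv.symm.toLinearMap, hu.comp Submodule.topEquiv.symm.surjective⟩
  obtain ⟨ψ, hψ⟩ := ih W hW.1 (IsSubquotient.of_le hLW hu)
  exact hsplit.exists_surjective_of_isCoatom hW hψ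

theorem NonisoSimpleExtensionsSplit.isSimpleModule_of_isBrick
    (hsplit : NonisoSimpleExtensionsSplit A) {B : ModA A} (hB : IsBrick B) :
    IsSimpleModule Aᵐᵒᵖ B.carrier := by
  have := hB.1
  obtain ⟨L, hL⟩ := IsAtomic.exists_atom (Submodule Aᵐᵒᵖ B.carrier)
  have := isSimpleModule_iff_isAtom.mpr hL
  have := IsSimpleModule.nontrivial Aᵐᵒᵖ L
  obtain ⟨φ, hφ⟩ := hsplit.exists_surjective_of_isSubquotient (S := L) B
    ((isSubquotient_of_surjective (u := LinearMap.id) surjective_id).of_injective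
      L.injective_subtype)
  have hL0 : L.subtype ∘ₗ φ ≠ 0 := fun h =>
    LinearMap.ne_zero_of_surjective hφ (by ext x; simpa using congr($h x))
  have hsurj : Surjective L.subtype :=
    Surjective.of_comp (f := ⇑L.subtype) (g := ⇑φ) (hB.2 _ hL0).2
  exact IsSimpleModule.congr (LinearEquiv.ofBijective L.subtype ⟨L.injective_subtype, hsurj⟩).symm

theorem NonisoSimpleExtensionsSplit.filt_simpleClasses (hsplit : NonisoSimpleExtensionsSplit A)
    (T : Tors A) : filt (simpleClasses T) = T := by
  refine le_antisymm (gc_filt_simpleClasses.l_u_le T) fun M hM S hS => ?_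
  obtain ⟨φ, hφ⟩ := hsplit.exists_surjective_of_isSubquotient M hS
  exact isoClass_mem_simpleClasses.mpr (T.mem_of_surjective hM hφ)

def NonisoSimpleExtensionsSplit.torsOrderIso (hsplit : NonisoSimpleExtensionsSplit A) :
    Tors A ≃o Set (SimpleClass A) where
  toFun := simpleClasses
  invFun := filt
  left_inv := hsplit.filt_simpleClasses
  right_inv := simpleClasses_filt
  map_rel_iff' {T T'} := by
    change simpleClasses T ≤ simpleClasses T' ↔ T ≤ T'
    rw [← gc_filt_simpleClasses.le_iff_le, hsplit.filt_simpleClasses]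

theorem NonisoSimpleExtensionsSplit.upperSemimodular (hsplit : NonisoSimpleExtensionsSplit A) :
    UpperSemimodular (Tors A) :=
  upperSemimodular_of_orderIso hsplit.torsOrderIso

theorem nonisoSimpleExtensionsSplit_of_upperSemimodular (h : UpperSemimodular (Tors A)) :
    NonisoSimpleExtensionsSplit A := by
  intro Y U hU hU' hiso
  by_contra! hns
  let X : SimpleMod A := ⟨⟨U⟩, isSimpleModule_iff_isAtom.mpr hU⟩
  let Z : SimpleMod A := ⟨⟨Y.carrier ⧸ U⟩, isSimpleModule_iff_isCoatom.mpr hU'⟩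
  have hXZ : X.isoClass ≠ Z.isoClass := fun h =>
    hiso.false (SimpleMod.isoClass_eq_isoClass.mp h).some
  let a := filt {Z.isoClass}
  let b := filt {X.isoClass}
  have hab : a ⊓ b = ⊥ := by
    rw [← filt_inter, Set.singleton_inter_eq_empty.mpr (Set.mem_singleton_iff.not.mpr hXZ.symm),
      filt_empty]
  have hcov : a ⋖ a ⊔ b := (h a b (hab ▸ (isAtom_filt_singleton _).bot_covBy)
    (hab ▸ (isAtom_filt_singleton _).bot_covBy)).1
  have hXb : X.1 ∈ b.1 := mem_filt_simpleMod.mpr rfl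
  have hZa : Z.1 ∈ a.1 := mem_filt_simpleMod.mpr rfl
  have hY : Y ∈ (a ⊔ b).1 :=
    (a ⊔ b).mem_of_exact (X := ⟨U⟩) (Z := ⟨Y.carrier ⧸ U⟩) U.injective_subtype U.mkQ_surjective
      (by rw [Submodule.range_subtype, Submodule.ker_mkQ]) (le_sup_right (a := a) hXb)
      (le_sup_left (b := b) hZa)
  have hYtop : Y ∈ (topIn {Z.isoClass}).1 := by
    rintro S ⟨φ, hφ⟩
    let e := φ.quotKerEquivOfSurjective hφ
    have hkerU : LinearMap.ker φ = U := (isSimpleModule_iff_isCoatom.mp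
      (IsSimpleModule.congr e)).eq_of_isAtom_of_forall_not_isCompl hU hU' hns
    exact SimpleMod.isoClass_eq_isoClass.mpr ⟨e.symm.trans (Submodule.quotEquivOfEq _ _ hkerU)⟩
  have hYa : Y ∉ a.1 := fun hYa => hXZ (hYa X
    ((isSubquotient_of_surjective (u := LinearMap.id) surjective_id).of_injective
      U.injective_subtype))
  have hXtop : X.1 ∉ (topIn {Z.isoClass}).1 := fun hX => hXZ (hX X ⟨LinearMap.id, surjective_id⟩)
  refine hcov.2 (c := (a ⊔ b) ⊓ topIn {Z.isoClass}) ?_ ?_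
  · exact lt_of_le_not_ge (le_inf le_sup_left (filt_le_topIn _))
      fun hle => hYa (hle (Tors.mem_inf.mpr ⟨hY, hYtop⟩))
  · exact lt_of_le_not_ge inf_le_left
      fun hle => hXtop (Tors.mem_inf.mp (hle (le_sup_right (a := a) hXb))).2

end Artinian

end TorsionClasses

theorem stmt4_general (K A : Type) [Field K] [Ring A] [Algebra K A]
    [FiniteDimensional K A] :
    UpperSemimodular (Tors A) ↔
      (∀ B : ModA A, IsBrick B →
      ∃ S : ModA A, IsSimpleModule Aᵐᵒᵖ S.carrier ∧ Nonempty (B.carrier ≃ₗ[Aᵐᵒᵖ] S.carrier)) := by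
  have : IsArtinianRing Aᵐᵒᵖ := IsArtinianRing.of_finite K Aᵐᵒᵖ
  refine ⟨fun h B hB => ?_,
    fun h => (nonisoSimpleExtensionsSplit_of_forall_isBrick h).upperSemimodular⟩
  exact ⟨B, (nonisoSimpleExtensionsSplit_of_upperSemimodular h).isSimpleModule_of_isBrick hB,
    ⟨LinearEquiv.refl _ _⟩⟩

/-- `tors A` is upper semimodular iff every brick in `mod A` is
isomorphic to a simple `A`-module. -/
theorem stmt4 (K A : Type) [Field K] [IsAlgClosed K] [Ring A] [Algebra K A]
    [FiniteDimensional K A] :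
    UpperSemimodular (Tors A) ↔
      (∀ B : ModA A, IsBrick B →
      ∃ S : ModA A, IsSimpleModule Aᵐᵒᵖ S.carrier ∧ Nonempty (B.carrier ≃ₗ[Aᵐᵒᵖ] S.carrier)) :=
  stmt4_general K A
end

section
/- If A is isomorphic as a K-algebra to a product A_1 × ... × A_m of finitely many finite-dimensional local K-algebras, then every brick in mod A is isomorphic to a simple A-module. -/
/-! Preamble: the category `mod A` of finite-dimensional right `A`-modules,
torsion(-free) classes, the complete lattice `tors A`, functorially finite
torsion classes, bricks, etc. -/

open Function

/-! A central idempotent of `A` acts on a brick by an idempotent endomorphism, which is injective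
unless it is zero, hence as `0` or `1`; so the brick is a module over a single local factor `Aᵢ`. Since `K` is algebraically closed,
every element of `Aᵢ` is a scalar plus a nilpotent element of the Jacobson radical, so `A` acts on
each simple subquotient of the brick through one character `χ : A → K`. For `x` in the socle and a
functional `φ` vanishing on a maximal submodule `N`, the map `b ↦ φ b • x` is then `A`-linear,
nonzero, and kills `N`; the brick property forces `N = 0`, so the brick is simple. -/

section LocalRing

variable {L : Type*} [Ring L] [IsLocalRing L]

theorem IsLocalRing.mem_jacobson_of_not_isUnit [IsDedekindFiniteMonoid L] {x : L}
    (hx : ¬IsUnit x) : x ∈ Ring.jacobson L := by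
  rw [← Ideal.jacobson_bot, Ideal.mem_jacobson_iff]
  intro y
  have hyx : ¬IsUnit (-(y * x)) := fun h =>
    hx (isUnit_of_mul_isUnit_right ((IsUnit.neg_iff _).1 h))
  obtain ⟨u, hu⟩ :=
    (isUnit_or_isUnit_of_add_one (add_neg_cancel_right 1 (y * x))).resolve_right hyx
  refine ⟨↑u⁻¹, ?_⟩
  rw [Submodule.mem_bot, sub_eq_zero, mul_assoc, ← mul_add_one, add_comm, ← hu, Units.inv_mul]

instance MulOpposite.instIsLocalRing : IsLocalRing Lᵐᵒᵖ where
  isUnit_or_isUnit_of_add_one {a b} h :=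
    (IsLocalRing.isUnit_or_isUnit_of_add_one (congrArg unop h : a.unop + b.unop = 1)).imp
      isUnit_op.2 isUnit_op.2

theorem IsLocalRing.exists_sub_algebraMap_mem_jacobson (K : Type*) [Field K] [IsAlgClosed K]
    [Algebra K L] [FiniteDimensional K L] (x : L) :
    ∃ c : K, x - algebraMap K L c ∈ Ring.jacobson L := by
  have : IsArtinianRing L := IsArtinianRing.of_finite K L
  obtain ⟨c, hc⟩ := spectrum.nonempty_of_isAlgClosed_of_finiteDimensional K x
  refine ⟨c, mem_jacobson_of_not_isUnit fun h => spectrum.mem_iff.1 hc ?_⟩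
  simpa [neg_sub] using h.neg

end LocalRing

theorem IsSemiprimaryRing.isNilpotent_of_mem_jacobson {L : Type*} [Ring L] [IsSemiprimaryRing L]
    {x : L} (hx : x ∈ Ring.jacobson L) : IsNilpotent x := by
  obtain ⟨n, hn⟩ := IsSemiprimaryRing.isNilpotent (R := L)
  exact ⟨n, by simpa [hn] using Ideal.pow_mem_pow hx n⟩

theorem IsSimpleModule.le_annihilator_of_pow_mem {R S : Type*} [Ring R] [AddCommGroup S]
    [Module R S] [IsSimpleModule R S] (I : Ideal R) (hI : ∀ c ∈ I, ∃ n : ℕ, c ^ n ∈ Module.annihilator R S) :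
    I ≤ Module.annihilator R S := by
  intro c hc
  rw [Module.mem_annihilator]
  intro s
  rcases eq_bot_or_eq_top (Submodule.map (LinearMap.toSpanSingleton R S s) I) with h | h
  · exact (Submodule.mem_bot R).1 (h ▸ Submodule.mem_map_of_mem hc)
  · obtain ⟨d, hd, hds⟩ := Submodule.mem_map.1 (h ▸ Submodule.mem_top : s ∈ _)
    obtain ⟨n, hn⟩ := hI d hd
    have hfix : d ^ n • s = s := by
      have := (show IsFixedPt (d • ·) s from hds).iterate n
      rwa [smul_iterate] at this
    rw [← hfix, Module.mem_annihilator.1 hn, smul_zero]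

theorem IsIdempotentElem.smul_eq_zero_or_smul_eq_self {R M : Type*} [Ring R] [AddCommGroup M]
    [Module R M] {e : R} (he : IsIdempotentElem e) (hc : e ∈ Set.center R)
    (hM : ∀ f : M →ₗ[R] M, f ≠ 0 → Injective f) :
    (∀ x : M, e • x = 0) ∨ ∀ x : M, e • x = x := by
  by_cases h : Module.End.smulLeft e hc = (0 : Module.End R M)
  · exact .inl fun x => LinearMap.congr_fun h x
  · exact .inr fun x => hM _ h (show e • e • x = e • x by rw [smul_smul, he.eq])

section Brick

variable {K R : Type*} [Field K] [Ring R] [Algebra K R]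

theorem IsSimpleModule.smul_eq_smul_of_sub_mem {I : Ideal R} {S : Type*} [AddCommGroup S]
    [Module R S] [Module K S] [IsScalarTower K R S] [IsSimpleModule R S]
    (hI : ∀ c ∈ I, ∃ n : ℕ, c ^ n ∈ Module.annihilator R S) {r : R} {c : K}
    (hrc : r - algebraMap K R c ∈ I) (s : S) : r • s = c • s := by
  have := Module.mem_annihilator.1 (le_annihilator_of_pow_mem I hI hrc) s
  rwa [sub_smul, algebraMap_smul, sub_eq_zero] at this

variable {M : Type*} [AddCommGroup M] [Module R M] [Module K M] [IsScalarTower K R M]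
  [IsArtinian R M] [IsNoetherian R M] [Nontrivial M]

theorem IsSimpleModule.of_forall_ne_zero_injective {I : Ideal R}
    (hIK : ∀ r : R, ∃ c : K, r - algebraMap K R c ∈ I)
    (hI : ∀ c ∈ I, ∃ n : ℕ, c ^ n ∈ Module.annihilator R M)
    (hM : ∀ f : M →ₗ[R] M, f ≠ 0 → Injective f) : IsSimpleModule R M := by
  choose χ hχ using hIK
  by_contra hns
  obtain ⟨W, hW⟩ := IsAtomic.exists_atom (Submodule R M)
  have : IsSimpleModule R W := isSimpleModule_iff_isAtom.2 hW
  obtain ⟨x, hxW, hx0⟩ := W.ne_bot_iff.1 hW.1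
  have hx : ∀ r, r • x = χ r • x := fun r => congrArg Subtype.val <|
    smul_eq_smul_of_sub_mem (fun c hc => (hI c hc).imp fun _ hn =>
      W.subtype.annihilator_le_of_injective Subtype.val_injective hn) (hχ r) ⟨x, hxW⟩
  obtain ⟨N, hN⟩ := IsCoatomic.exists_coatom (Submodule R M)
  have : IsSimpleModule R (M ⧸ N) := isSimpleModule_iff_isCoatom.2 hN
  have hNχ : ∀ r b, r • b - χ r • b ∈ N := fun r b => (Submodule.Quotient.eq N).1 <|
    smul_eq_smul_of_sub_mem (fun c hc => (hI c hc).imp fun _ hn =>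
      N.mkQ.annihilator_le_of_surjective N.mkQ_surjective hn) (hχ r) (Submodule.Quotient.mk b)
  obtain ⟨b₀, hb₀⟩ := SetLike.exists_not_mem_of_ne_top N hN.1 rfl
  obtain ⟨φ, hφb₀, hNφ⟩ := Submodule.exists_le_ker_of_notMem (p := N.restrictScalars K) hb₀
  have hφ : ∀ r b, φ (r • b) = χ r * φ b := fun r b => by
    have := hNφ (hNχ r b)
    rwa [LinearMap.mem_ker, map_sub, map_smul φ (χ r) b, smul_eq_mul, sub_eq_zero] at this
  let f : M →ₗ[R] M :=
    { φ.smulRight x with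
      map_smul' := fun r b => show φ (r • b) • x = r • φ b • x by
        rw [hφ, mul_comm, mul_smul, ← hx r, smul_comm] }
  have hf : f ≠ 0 := fun h => smul_ne_zero hφb₀ hx0 (LinearMap.congr_fun h b₀)
  obtain ⟨n, hnN, hn0⟩ := N.ne_bot_iff.1 fun h =>
    hns ((isSimpleModule_iff R M).2 (isSimpleOrder_iff_isCoatom_bot.2 (h ▸ hN)))
  refine hn0 (hM f hf ?_)
  show φ n • x = f 0
  rw [map_zero, hNφ hnN, zero_smul]

theorem IsSimpleModule.of_forall_ne_zero_injective_of_algHom [IsAlgClosed K] {L : Type*} [Ring L]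
    [IsLocalRing L] [Algebra K L] [FiniteDimensional K L] (φ : R →ₐ[K] L)
    (hφ : RingHom.ker φ ≤ Module.annihilator R M) (hM : ∀ f : M →ₗ[R] M, f ≠ 0 → Injective f) :
    IsSimpleModule R M := by
  have : IsArtinianRing L := IsArtinianRing.of_finite K L
  refine of_forall_ne_zero_injective (K := K) (I := (Ring.jacobson L).comap φ) (fun r => ?_)
    (fun c hc => ?_) hM
  · obtain ⟨c, hc⟩ := IsLocalRing.exists_sub_algebraMap_mem_jacobson K (φ r)
    exact ⟨c, by simpa using hc⟩
  · obtain ⟨n, hn⟩ := IsSemiprimaryRing.isNilpotent_of_mem_jacobson (Ideal.mem_comap.1 hc)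
    exact ⟨n, hφ (by simpa using hn)⟩

end Brick

namespace LocalAlgebraFactorization

attribute [local instance] ringB algB finB localB

open MulOpposite

variable {K A : Type} [Field K] [Ring A] [Algebra K A]

section Idempotents

variable (F : LocalAlgebraFactorization K A)

def proj (i : Fin F.m) : A →ₐ[K] F.B i := (Pi.evalAlgHom K F.B i).comp F.equiv.toAlgHom

def idem (i : Fin F.m) : A := F.equiv.symm (Pi.single i 1)

theorem equiv_idem_mul (i : Fin F.m) (a : A) :
    F.equiv (F.idem i * a) = Pi.single i (F.proj i a) := by
  rw [map_mul, idem, AlgEquiv.apply_symm_apply, ← Pi.single_mul_left, one_mul]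
  rfl

theorem equiv_mul_idem (i : Fin F.m) (a : A) :
    F.equiv (a * F.idem i) = Pi.single i (F.proj i a) := by
  rw [map_mul, idem, AlgEquiv.apply_symm_apply, ← Pi.single_mul_right, mul_one]
  rfl

theorem idem_mem_center (i : Fin F.m) : F.idem i ∈ Set.center A :=
  Semigroup.mem_center_iff.2 fun a => F.equiv.injective (by rw [equiv_mul_idem, equiv_idem_mul])

theorem isIdempotentElem_idem (i : Fin F.m) : IsIdempotentElem (F.idem i) :=
  F.equiv.injective (by rw [equiv_idem_mul]; simp [proj, idem])

theorem sum_idem : ∑ i, F.idem i = 1 :=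
  F.equiv.injective (by simp [idem, Finset.univ_sum_single, Pi.one_def])

theorem idem_mul_eq_zero {i : Fin F.m} {a : A} (h : F.proj i a = 0) : F.idem i * a = 0 :=
  F.equiv.injective (by rw [equiv_idem_mul, h, Pi.single_zero, map_zero])

end Idempotents

variable {M : Type*} [AddCommGroup M] [Module Aᵐᵒᵖ M]

theorem exists_ker_le_annihilator (F : LocalAlgebraFactorization K A) [Nontrivial M]
    (hM : ∀ f : M →ₗ[Aᵐᵒᵖ] M, f ≠ 0 → Injective f) :
    ∃ i, RingHom.ker (AlgHom.op (F.proj i)) ≤ Module.annihilator Aᵐᵒᵖ M := by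
  have hidem (i : Fin F.m) : (∀ x : M, op (F.idem i) • x = 0) ∨ ∀ x : M, op (F.idem i) • x = x :=
    IsIdempotentElem.smul_eq_zero_or_smul_eq_self (congrArg op (F.isIdempotentElem_idem i))
      (op_mem_center_iff.2 (F.idem_mem_center i)) hM
  obtain ⟨i, hi⟩ : ∃ i, ∀ x : M, op (F.idem i) • x = x := by
    by_contra! h
    obtain ⟨x, hx⟩ := exists_ne (0 : M)
    refine hx ?_
    rw [← one_smul Aᵐᵒᵖ x, ← op_one, ← F.sum_idem, Finset.op_sum, Finset.sum_smul]
    exact Finset.sum_eq_zero fun i _ =>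
      (hidem i).resolve_right (fun h' => (h i).elim fun y hy => hy (h' y)) x
  refine ⟨i, fun c hc => Module.mem_annihilator.2 fun x => ?_⟩
  have hc' : c * op (F.idem i) = 0 := congrArg op (F.idem_mul_eq_zero (congrArg unop hc))
  rw [← hi x, smul_smul, hc', zero_smul]

theorem isSimpleModule_of_forall_ne_zero_injective (F : LocalAlgebraFactorization K A)
    [IsAlgClosed K] [Module K M]
    [IsScalarTower K Aᵐᵒᵖ M] [IsArtinian Aᵐᵒᵖ M] [IsNoetherian Aᵐᵒᵖ M] [Nontrivial M]
    (hM : ∀ f : M →ₗ[Aᵐᵒᵖ] M, f ≠ 0 → Injective f) : IsSimpleModule Aᵐᵒᵖ M := by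
  obtain ⟨i, hi⟩ := F.exists_ker_le_annihilator hM
  exact .of_forall_ne_zero_injective_of_algHom (AlgHom.op (F.proj i)) hi hM

end LocalAlgebraFactorization

/-- if `A` is isomorphic as a `K`-algebra to a finite product of
finite-dimensional local `K`-algebras, then every brick in `mod A` is isomorphic to a
simple `A`-module. -/
theorem stmt6 (K A : Type) [Field K] [IsAlgClosed K] [Ring A] [Algebra K A]
    [FiniteDimensional K A]
    (h : Nonempty (LocalAlgebraFactorization K A)) :
    ∀ B : ModA A, IsBrick B →
      ∃ S : ModA A, IsSimpleModule Aᵐᵒᵖ S.carrier ∧ Nonempty (B.carrier ≃ₗ[Aᵐᵒᵖ] S.carrier) := by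
  obtain ⟨F⟩ := h
  rintro B ⟨hB, hBend⟩
  let : Module K B := Module.compHom B (algebraMap K Aᵐᵒᵖ)
  have : IsScalarTower K Aᵐᵒᵖ B := IsScalarTower.of_compHom K Aᵐᵒᵖ B
  have : Module.Finite K B := Module.Finite.trans Aᵐᵒᵖ B
  have : IsArtinian Aᵐᵒᵖ B := isArtinian_of_tower K inferInstance
  have : IsNoetherian Aᵐᵒᵖ B := isNoetherian_of_tower K inferInstance
  exact ⟨B, F.isSimpleModule_of_forall_ne_zero_injective fun f hf => (hBend f hf).injective,
    ⟨LinearEquiv.refl _ _⟩⟩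
end

section
/- Every torsion class T in mod A is characterized by the bricks it contains: T equals the join in tors A of the torsion classes T(B) as B ranges over all bricks belonging to T. In particular, two torsion classes containing the same bricks are equal. -/
/-! Preamble: the category `mod A` of finite-dimensional right `A`-modules,
torsion(-free) classes, the complete lattice `tors A`, functorially finite
torsion classes, bricks, etc. -/

open Function

/-! A module `M` of a torsion class `T` that is not a brick has an endomorphism `f` that is
neither zero nor invertible. As `M` has finite length, `f` is not surjective either, so `M` is
an extension of `M ⧸ range f` by `range f`: two nonzero quotients of `M`, hence of smaller
length and still in `T`. By induction on length, every torsion class containing the bricks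
of `T` contains `T`. -/

namespace Tors

variable {A : Type} [Ring A]

theorem mem_torsGen_self (B : ModA A) : B ∈ (torsGen {B}).1 :=
  Set.mem_sInter.2 (by rintro _ ⟨U, hU, rfl⟩; exact hU rfl)

theorem torsGen_singleton_le {B : ModA A} {T : Tors A} (h : B ∈ T.1) : torsGen {B} ≤ T :=
  sInf_le (Set.singleton_subset_iff.2 h)

theorem mem_of_submodule_mem_of_quotient_mem (T : Tors A) {M : ModA A}
    (S : Submodule Aᵐᵒᵖ M) [Module.Finite Aᵐᵒᵖ S] [Module.Finite Aᵐᵒᵖ (M ⧸ S)]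
    (hS : ⟨S⟩ ∈ T.1) (hQ : ⟨M ⧸ S⟩ ∈ T.1) : M ∈ T.1 :=
  T.2.2.2 ⟨S⟩ M ⟨M ⧸ S⟩ S.subtype S.mkQ Subtype.val_injective S.mkQ_surjective
    (by rw [Submodule.range_subtype, Submodule.ker_mkQ]) hS hQ

theorem le_of_forall_isBrick_mem [IsArtinianRing Aᵐᵒᵖ] {T U : Tors A}
    (h : ∀ B : ModA A, IsBrick B → B ∈ T.1 → B ∈ U.1) : T ≤ U := by
  intro M hM
  obtain ⟨n, hn⟩ : ∃ n, Module.length Aᵐᵒᵖ M = n := ⟨_, rfl⟩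
  induction n using WellFoundedLT.induction generalizing M with
  | _ n ih =>
    by_cases hsub : Subsingleton M
    · exact U.2.1 M hsub
    by_cases hbrick : IsBrick M
    · exact h M hbrick hM
    obtain ⟨f, hf0, hfbij⟩ : ∃ f : M →ₗ[Aᵐᵒᵖ] M, f ≠ 0 ∧ ¬Bijective f := by
      simpa [IsBrick, not_subsingleton_iff_nontrivial.1 hsub] using hbrick
    set S := LinearMap.range f
    have hS_ne_bot : S ≠ ⊥ := fun hS => hf0 (LinearMap.range_eq_bot.1 hS)
    -- `M` is Noetherian: right Artinian rings are right Noetherian (Hopkins–Levitzki).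
    have hS_ne_top : S ≠ ⊤ := fun hS =>
      hfbij (IsNoetherian.bijective_of_surjective_endomorphism f (LinearMap.range_eq_top.1 hS))
    have : Module.Finite Aᵐᵒᵖ (M ⧸ S) := Module.Finite.of_surjective S.mkQ S.mkQ_surjective
    refine mem_of_submodule_mem_of_quotient_mem U S ?_ ?_
    · exact ih _ (hn ▸ Submodule.length_lt hS_ne_top)
        (T.2.2.1 M ⟨S⟩ hM f.rangeRestrict f.surjective_rangeRestrict) rfl
    · exact ih _ (hn ▸ S.length_quotient_lt hS_ne_bot)
        (T.2.2.1 M ⟨M ⧸ S⟩ hM S.mkQ S.mkQ_surjective) rfl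

theorem eq_sSup_torsGen_bricks [IsArtinianRing Aᵐᵒᵖ] (T : Tors A) :
    T = sSup {X : Tors A | ∃ B : ModA A, IsBrick B ∧ B ∈ T.1 ∧ X = torsGen {B}} := by
  refine le_antisymm (le_of_forall_isBrick_mem fun B hB hBT => ?_) ?_
  · refine (le_sSup ?_ : torsGen {B} ≤ _) (mem_torsGen_self B)
    exact ⟨B, hB, hBT, rfl⟩
  · exact sSup_le fun X ⟨B, _, hBT, hX⟩ => hX ▸ torsGen_singleton_le hBT

end Tors

theorem stmt13_general (K A : Type) [Field K] [Ring A] [Algebra K A]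
    [FiniteDimensional K A] :
    (∀ T : Tors A,
      T = sSup {X : Tors A | ∃ B : ModA A, IsBrick B ∧ B ∈ T.1 ∧ X = torsGen {B}}) ∧
    (∀ T U : Tors A,
      {B : ModA A | IsBrick B ∧ B ∈ T.1} = {B : ModA A | IsBrick B ∧ B ∈ U.1} → T = U) := by
  have : IsArtinianRing Aᵐᵒᵖ := IsArtinianRing.of_finite K Aᵐᵒᵖ
  refine ⟨Tors.eq_sSup_torsGen_bricks, fun T U h => le_antisymm ?_ ?_⟩
  · exact Tors.le_of_forall_isBrick_mem fun B hB hBT => (h.subset ⟨hB, hBT⟩).2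
  · exact Tors.le_of_forall_isBrick_mem fun B hB hBU => (h.symm.subset ⟨hB, hBU⟩).2

/-- every torsion class `T` is the join of the `T(B)` over the bricks `B`
it contains; in particular two torsion classes containing the same bricks coincide. -/
theorem stmt13 (K A : Type) [Field K] [IsAlgClosed K] [Ring A] [Algebra K A]
    [FiniteDimensional K A] :
    (∀ T : Tors A,
      T = sSup {X : Tors A | ∃ B : ModA A, IsBrick B ∧ B ∈ T.1 ∧ X = torsGen {B}}) ∧
    (∀ T U : Tors A,
      {B : ModA A | IsBrick B ∧ B ∈ T.1} = {B : ModA A | IsBrick B ∧ B ∈ U.1} → T = U) :=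
  stmt13_general K A
end

section
/- The complete lattice tors A is completely semidistributive: for any torsion class X and any set S of torsion classes, if X ∨ Y = Z for all Y ∈ S then X ∨ (⋀ S) = Z, and if X ∧ Y = Z for all Y ∈ S then X ∧ (⋁ S) = Z. -/
/-! Preamble: the category `mod A` of finite-dimensional right `A`-modules,
torsion(-free) classes, the complete lattice `tors A`, functorially finite
torsion classes, bricks, etc. -/

open Function

/-! Over a right Artinian ring every module has finite length, so one may induct on length.
If `M ∈ X ⊓ ⋁S` is nonzero, then since `⋁S ⊆ ⊥((⋃S)⊥)` some `N ∈ Y ∈ S` maps nonzero to `M`;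
its image `R` lies in `Y`, and `M/R ∈ X ⊓ ⋁S` lies in `Z ⊆ Y` by induction, so `M ∈ X ⊓ Y = Z`.
The dual argument on submodules makes `torf A` meet-semidistributive, and `T ↦ T^⊥` is an
anti-isomorphism `tors A ≅ torf A` (its inverse `F ↦ ⊥F` is checked by the same induction), which
turns this into join-semidistributivity of `tors A`. -/

open LinearMap Submodule

namespace ModA

variable {A : Type} [Ring A]

@[reducible] def quotient (M : ModA A) (R : Submodule Aᵐᵒᵖ M.carrier) : ModA A :=
  { carrier := M.carrier ⧸ R }

@[reducible] def submodule (M : ModA A) [IsNoetherian Aᵐᵒᵖ M.carrier]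
    (R : Submodule Aᵐᵒᵖ M.carrier) : ModA A :=
  { carrier := R }

variable [IsArtinianRing Aᵐᵒᵖ]

theorem induction_quotient {P : ModA A → Prop}
    (step : ∀ M : ModA A, (∀ R : Submodule Aᵐᵒᵖ M.carrier, R ≠ ⊥ → P (M.quotient R)) → P M)
    (M : ModA A) : P M :=
  (InvImage.wf (fun M : ModA A => Module.length Aᵐᵒᵖ M.carrier) wellFounded_lt).induction M
    fun M ih => step M fun R hR => ih _ (R.length_quotient_lt hR)

theorem induction_submodule {P : ModA A → Prop}
    (step : ∀ M : ModA A, (∀ R : Submodule Aᵐᵒᵖ M.carrier, R ≠ ⊤ → P (M.submodule R)) → P M)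
    (M : ModA A) : P M :=
  (InvImage.wf (fun M : ModA A => Module.length Aᵐᵒᵖ M.carrier) wellFounded_lt).induction M
    fun M ih => step M fun _ hR => ih _ (Submodule.length_lt hR)

end ModA

namespace IsTorsionClass

variable {A : Type} [Ring A] {T : Set (ModA A)} (hT : IsTorsionClass T)
include hT

theorem mem_of_subsingleton (M : ModA A) [Subsingleton M.carrier] : M ∈ T :=
  hT.1 M inferInstance

theorem mem_of_surjective {M N : ModA A} (hM : M ∈ T) (f : M.carrier →ₗ[Aᵐᵒᵖ] N.carrier)
    (hf : Surjective f) : N ∈ T :=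
  hT.2.1 M N hM f hf

theorem quotient_mem {M : ModA A} (hM : M ∈ T) (R : Submodule Aᵐᵒᵖ M.carrier) :
    M.quotient R ∈ T :=
  hT.mem_of_surjective hM R.mkQ R.mkQ_surjective

theorem mem_of_submodule_mem_of_quotient_mem {M : ModA A} [IsNoetherian Aᵐᵒᵖ M.carrier]
    {R : Submodule Aᵐᵒᵖ M.carrier} (hR : M.submodule R ∈ T) (hQ : M.quotient R ∈ T) : M ∈ T :=
  hT.2.2 _ M _ R.subtype R.mkQ R.injective_subtype R.mkQ_surjective
    (by rw [range_subtype, ker_mkQ]) hR hQ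

theorem mem_of_hom_of_quotient_range_mem {M N : ModA A} [IsNoetherian Aᵐᵒᵖ M.carrier]
    (hN : N ∈ T) (f : N.carrier →ₗ[Aᵐᵒᵖ] M.carrier) (hQ : M.quotient (range f) ∈ T) : M ∈ T :=
  hT.mem_of_submodule_mem_of_quotient_mem
    (hT.mem_of_surjective hN f.rangeRestrict f.surjective_rangeRestrict) hQ

end IsTorsionClass

namespace IsTorsionFreeClass

variable {A : Type} [Ring A] {F : Set (ModA A)} (hF : IsTorsionFreeClass F)
include hF

theorem mem_of_subsingleton (M : ModA A) [Subsingleton M.carrier] : M ∈ F :=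
  hF.1 M inferInstance

theorem mem_of_injective {M N : ModA A} (hM : M ∈ F) (f : N.carrier →ₗ[Aᵐᵒᵖ] M.carrier)
    (hf : Injective f) : N ∈ F :=
  hF.2.1 M N hM f hf

theorem submodule_mem {M : ModA A} [IsNoetherian Aᵐᵒᵖ M.carrier] (hM : M ∈ F)
    (R : Submodule Aᵐᵒᵖ M.carrier) : M.submodule R ∈ F :=
  hF.mem_of_injective hM R.subtype R.injective_subtype

theorem mem_of_submodule_mem_of_quotient_mem {M : ModA A} [IsNoetherian Aᵐᵒᵖ M.carrier]
    {R : Submodule Aᵐᵒᵖ M.carrier} (hR : M.submodule R ∈ F) (hQ : M.quotient R ∈ F) : M ∈ F :=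
  hF.2.2 _ M _ R.subtype R.mkQ R.injective_subtype R.mkQ_surjective
    (by rw [range_subtype, ker_mkQ]) hR hQ

theorem mem_of_hom_of_ker_mem {M N : ModA A} [IsNoetherian Aᵐᵒᵖ M.carrier]
    (hN : N ∈ F) (g : M.carrier →ₗ[Aᵐᵒᵖ] N.carrier) (hK : M.submodule (ker g) ∈ F) : M ∈ F :=
  hF.mem_of_submodule_mem_of_quotient_mem hK <| hF.mem_of_injective hN
    ((range g).subtype ∘ₗ g.quotKerEquivRange.toLinearMap)
    ((range g).injective_subtype.comp g.quotKerEquivRange.injective)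

end IsTorsionFreeClass

section Perp

variable {A : Type} [Ring A]

theorem isTorsionFreeClass_rightPerp (C : Set (ModA A)) : IsTorsionFreeClass (rightPerp C) := by
  refine ⟨fun M _ N _ f => Subsingleton.elim f 0, fun M N hM ι hι W hW f => ?_,
    fun X Y Z a g ha _ he hX hZ W hW f => ?_⟩
  · ext w
    exact hι (by simpa using LinearMap.congr_fun (hM W hW (ι ∘ₗ f)) w)
  -- `f` lands in `ker g = range a`, so it factors through `a`, and that factor is zero.
  · have hfa (w : W.carrier) : f w ∈ range a :=
      he ▸ (by simpa using LinearMap.congr_fun (hZ W hW (g ∘ₗ f)) w)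
    have h0 := hX W hW ((LinearEquiv.ofInjective a ha).symm.toLinearMap ∘ₗ f.codRestrict _ hfa)
    ext w
    have hw : f.codRestrict _ hfa w = 0 := by
      simpa [LinearEquiv.symm_apply_eq] using LinearMap.congr_fun h0 w
    simpa using congrArg Subtype.val hw

theorem isTorsionClass_leftPerp (C : Set (ModA A)) : IsTorsionClass (leftPerp C) := by
  refine ⟨fun M _ N _ f => Subsingleton.elim f 0, fun M N hM s hs W hW f => ?_,
    fun X Y Z a g _ hg he hX hZ W hW f => ?_⟩
  · ext n
    obtain ⟨m, rfl⟩ := hs n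
    simpa using LinearMap.congr_fun (hM W hW (f ∘ₗ s)) m
  -- `f` kills `ker g = range a`, so it factors through `g`, and that factor is zero.
  · have hker : ker g ≤ ker f := by
      rw [← he]
      rintro _ ⟨x, rfl⟩
      simpa using LinearMap.congr_fun (hX W hW (f ∘ₗ a)) x
    have h0 := hZ W hW ((ker g).liftQ f hker ∘ₗ (g.quotKerEquivOfSurjective hg).symm.toLinearMap)
    ext y
    simpa using LinearMap.congr_fun h0 (g y)

theorem subset_leftPerp_iff_subset_rightPerp {C D : Set (ModA A)} :
    C ⊆ leftPerp D ↔ D ⊆ rightPerp C :=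
  ⟨fun h _ hM _ hN f => h hN _ hM f, fun h _ hN _ hM f => h hM _ hN f⟩

theorem rightPerp_anti {C D : Set (ModA A)} (h : C ⊆ D) : rightPerp D ⊆ rightPerp C :=
  fun _ hM N hN => hM N (h hN)

theorem leftPerp_anti {C D : Set (ModA A)} (h : C ⊆ D) : leftPerp D ⊆ leftPerp C :=
  fun _ hM N hN => hM N (h hN)

theorem subset_leftPerp_rightPerp (C : Set (ModA A)) : C ⊆ leftPerp (rightPerp C) :=
  subset_leftPerp_iff_subset_rightPerp.2 subset_rfl

theorem subset_rightPerp_leftPerp (C : Set (ModA A)) : C ⊆ rightPerp (leftPerp C) :=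
  subset_leftPerp_iff_subset_rightPerp.1 subset_rfl

theorem subsingleton_of_mem_leftPerp_of_mem {C : Set (ModA A)} {M : ModA A}
    (h : M ∈ leftPerp C) (hM : M ∈ C) : Subsingleton M.carrier :=
  ⟨fun x y => sub_eq_zero.1 (by simpa using LinearMap.congr_fun (h M hM LinearMap.id) (x - y))⟩

theorem subsingleton_of_mem_rightPerp_of_mem {C : Set (ModA A)} {M : ModA A}
    (h : M ∈ rightPerp C) (hM : M ∈ C) : Subsingleton M.carrier :=
  ⟨fun x y => sub_eq_zero.1 (by simpa using LinearMap.congr_fun (h M hM LinearMap.id) (x - y))⟩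

theorem exists_hom_ne_zero_of_mem_leftPerp_rightPerp {C : Set (ModA A)} {M : ModA A}
    [Nontrivial M.carrier] (hM : M ∈ leftPerp (rightPerp C)) :
    ∃ N ∈ C, ∃ f : N.carrier →ₗ[Aᵐᵒᵖ] M.carrier, f ≠ 0 := by
  by_contra! h
  exact not_subsingleton M.carrier (subsingleton_of_mem_leftPerp_of_mem hM h)

theorem exists_hom_ne_zero_of_mem_rightPerp_leftPerp {C : Set (ModA A)} {M : ModA A}
    [Nontrivial M.carrier] (hM : M ∈ rightPerp (leftPerp C)) :
    ∃ N ∈ C, ∃ g : M.carrier →ₗ[Aᵐᵒᵖ] N.carrier, g ≠ 0 := by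
  by_contra! h
  exact not_subsingleton M.carrier (subsingleton_of_mem_rightPerp_of_mem hM h)

theorem Tors.sSup_subset_leftPerp_rightPerp (S : Set (Tors A)) :
    (sSup S).1 ⊆ leftPerp (rightPerp (⋃ Y ∈ S, Y.1)) :=
  show sSup S ≤ ⟨_, isTorsionClass_leftPerp _⟩ from sSup_le fun _ hY =>
    (Set.subset_biUnion_of_mem hY).trans (subset_leftPerp_rightPerp _)

theorem Torf.sSup_subset_rightPerp_leftPerp (S : Set (Torf A)) :
    (sSup S).1 ⊆ rightPerp (leftPerp (⋃ F ∈ S, F.1)) :=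
  show sSup S ≤ ⟨_, isTorsionFreeClass_rightPerp _⟩ from sSup_le fun _ hF =>
    (Set.subset_biUnion_of_mem hF).trans (subset_rightPerp_leftPerp _)

end Perp

theorem Tors.coe_inf {A : Type} [Ring A] (X Y : Tors A) : (X ⊓ Y).1 = X.1 ∩ Y.1 := by
  ext M
  show M ∈ ⋂₀ (Subtype.val '' {X, Y}) ↔ _
  refine ⟨fun h => ⟨h _ ⟨X, .inl rfl, rfl⟩, h _ ⟨Y, .inr rfl, rfl⟩⟩, ?_⟩
  rintro ⟨hX, hY⟩ _ ⟨_, rfl | rfl, rfl⟩ <;> assumption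

theorem Torf.coe_inf {A : Type} [Ring A] (X Y : Torf A) : (X ⊓ Y).1 = X.1 ∩ Y.1 := by
  ext M
  show M ∈ ⋂₀ (Subtype.val '' {X, Y}) ↔ _
  refine ⟨fun h => ⟨h _ ⟨X, .inl rfl, rfl⟩, h _ ⟨Y, .inr rfl, rfl⟩⟩, ?_⟩
  rintro ⟨hX, hY⟩ _ ⟨_, rfl | rfl, rfl⟩ <;> assumption

section FiniteLength

variable {A : Type} [Ring A] [IsArtinianRing Aᵐᵒᵖ]

theorem leftPerp_rightPerp_eq {T : Set (ModA A)} (hT : IsTorsionClass T) :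
    leftPerp (rightPerp T) = T := by
  refine subset_antisymm (fun M => ?_) (subset_leftPerp_rightPerp T)
  refine ModA.induction_quotient (P := fun M => M ∈ leftPerp (rightPerp T) → M ∈ T) (fun M ih hM => ?_) M
  cases subsingleton_or_nontrivial M.carrier
  · exact hT.mem_of_subsingleton M
  obtain ⟨N, hN, f, hf⟩ := exists_hom_ne_zero_of_mem_leftPerp_rightPerp hM
  exact hT.mem_of_hom_of_quotient_range_mem hN f
    (ih _ (range_eq_bot.not.2 hf) ((isTorsionClass_leftPerp _).quotient_mem hM _))

theorem rightPerp_leftPerp_eq {F : Set (ModA A)} (hF : IsTorsionFreeClass F) :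
    rightPerp (leftPerp F) = F := by
  refine subset_antisymm (fun M => ?_) (subset_rightPerp_leftPerp F)
  refine ModA.induction_submodule (P := fun M => M ∈ rightPerp (leftPerp F) → M ∈ F) (fun M ih hM => ?_) M
  cases subsingleton_or_nontrivial M.carrier
  · exact hF.mem_of_subsingleton M
  obtain ⟨N, hN, g, hg⟩ := exists_hom_ne_zero_of_mem_rightPerp_leftPerp hM
  exact hF.mem_of_hom_of_ker_mem hN g
    (ih _ (ker_eq_top.not.2 hg) ((isTorsionFreeClass_rightPerp _).submodule_mem hM _))

def Tors.orderIsoTorf : Tors A ≃o (Torf A)ᵒᵈ :=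
  Equiv.toOrderIso
    { toFun := fun T => OrderDual.toDual ⟨rightPerp T.1, isTorsionFreeClass_rightPerp _⟩
      invFun := fun F => ⟨leftPerp (OrderDual.ofDual F).1, isTorsionClass_leftPerp _⟩
      left_inv := fun T => Subtype.ext (leftPerp_rightPerp_eq T.2)
      right_inv := fun F => Subtype.ext (rightPerp_leftPerp_eq (OrderDual.ofDual F).2) }
    (fun _ _ h => rightPerp_anti h) (fun _ _ h => leftPerp_anti h)

theorem Tors.inf_sSup_eq_of_forall_inf_eq {X Z : Tors A} {S : Set (Tors A)} (hS : S.Nonempty)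
    (h : ∀ Y ∈ S, X ⊓ Y = Z) : X ⊓ sSup S = Z := by
  obtain ⟨Y₀, hY₀⟩ := hS
  refine le_antisymm (fun M hM => ?_) (h Y₀ hY₀ ▸ inf_le_inf_left X (le_sSup hY₀))
  rw [coe_inf] at hM
  refine ModA.induction_quotient (P := fun M => M ∈ X.1 ∩ (sSup S).1 → M ∈ Z.1)
    (fun M ih hM => ?_) M hM
  cases subsingleton_or_nontrivial M.carrier
  · exact Z.2.mem_of_subsingleton M
  obtain ⟨N, hN, f, hf⟩ :=
    exists_hom_ne_zero_of_mem_leftPerp_rightPerp (sSup_subset_leftPerp_rightPerp S hM.2)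
  obtain ⟨Y, hY, hNY⟩ := Set.mem_iUnion₂.1 hN
  have hZY : Z ≤ Y := h Y hY ▸ inf_le_right
  have hMY : M ∈ Y.1 := Y.2.mem_of_hom_of_quotient_range_mem hNY f <| hZY <|
    ih _ (range_eq_bot.not.2 hf) ⟨X.2.quotient_mem hM.1 _, (sSup S).2.quotient_mem hM.2 _⟩
  rw [← h Y hY, coe_inf]
  exact ⟨hM.1, hMY⟩

theorem Torf.inf_sSup_eq_of_forall_inf_eq {X Z : Torf A} {S : Set (Torf A)} (hS : S.Nonempty)
    (h : ∀ F ∈ S, X ⊓ F = Z) : X ⊓ sSup S = Z := by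
  obtain ⟨F₀, hF₀⟩ := hS
  refine le_antisymm (fun M hM => ?_) (h F₀ hF₀ ▸ inf_le_inf_left X (le_sSup hF₀))
  rw [coe_inf] at hM
  refine ModA.induction_submodule (P := fun M => M ∈ X.1 ∩ (sSup S).1 → M ∈ Z.1)
    (fun M ih hM => ?_) M hM
  cases subsingleton_or_nontrivial M.carrier
  · exact Z.2.mem_of_subsingleton M
  obtain ⟨N, hN, g, hg⟩ :=
    exists_hom_ne_zero_of_mem_rightPerp_leftPerp (sSup_subset_rightPerp_leftPerp S hM.2)
  obtain ⟨F, hF, hNF⟩ := Set.mem_iUnion₂.1 hN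
  have hZF : Z ≤ F := h F hF ▸ inf_le_right
  have hMF : M ∈ F.1 := F.2.mem_of_hom_of_ker_mem hNF g <| hZF <|
    ih _ (ker_eq_top.not.2 hg) ⟨X.2.submodule_mem hM.1 _, (sSup S).2.submodule_mem hM.2 _⟩
  rw [← h F hF, coe_inf]
  exact ⟨hM.1, hMF⟩

end FiniteLength

theorem OrderIso.sup_sInf_eq_of_forall_sup_eq {α β : Type*} [CompleteLattice α]
    [CompleteLattice β] (e : α ≃o βᵒᵈ)
    (hβ : ∀ {x z : β} {S : Set β}, S.Nonempty → (∀ y ∈ S, x ⊓ y = z) → x ⊓ sSup S = z)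
    {x z : α} {S : Set α} (hS : S.Nonempty) (h : ∀ y ∈ S, x ⊔ y = z) : x ⊔ sInf S = z := by
  apply e.injective
  apply OrderDual.ofDual.injective
  rw [map_sup, ofDual_sup, e.map_sInf_eq_sInf_symm_preimage, ofDual_sInf]
  refine hβ ?_ fun y hy => ?_
  · obtain ⟨x', hx'⟩ := hS
    exact ⟨OrderDual.ofDual (e x'), by simpa using hx'⟩
  · simpa using congrArg (fun a => OrderDual.ofDual (e a)) (h _ hy)

theorem isArtinianRing_mulOpposite (K A : Type) [Field K] [Ring A] [Algebra K A]
    [FiniteDimensional K A] : IsArtinianRing Aᵐᵒᵖ :=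
  IsArtinianRing.of_finite K Aᵐᵒᵖ

theorem stmt15_general (K A : Type) [Field K] [Ring A] [Algebra K A]
    [FiniteDimensional K A] :
    (∀ (X Z : Tors A) (S : Set (Tors A)), S.Nonempty →
      (∀ Y ∈ S, X ⊔ Y = Z) → X ⊔ sInf S = Z) ∧
    (∀ (X Z : Tors A) (S : Set (Tors A)), S.Nonempty →
      (∀ Y ∈ S, X ⊓ Y = Z) → X ⊓ sSup S = Z) := by
  have := isArtinianRing_mulOpposite K A
  exact ⟨fun _ _ _ => Tors.orderIsoTorf.sup_sInf_eq_of_forall_sup_eq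
    Torf.inf_sSup_eq_of_forall_inf_eq, fun _ _ _ => Tors.inf_sSup_eq_of_forall_inf_eq⟩

/-- `tors A` is completely semidistributive. -/
theorem stmt15 (K A : Type) [Field K] [IsAlgClosed K] [Ring A] [Algebra K A]
    [FiniteDimensional K A] :
    (∀ (X Z : Tors A) (S : Set (Tors A)), S.Nonempty →
      (∀ Y ∈ S, X ⊔ Y = Z) → X ⊔ sInf S = Z) ∧
    (∀ (X Z : Tors A) (S : Set (Tors A)), S.Nonempty →
      (∀ Y ∈ S, X ⊓ Y = Z) → X ⊓ sSup S = Z) :=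
  stmt15_general K A
end

section
/- A torsion class T covers the zero torsion class 0 in the lattice tors A if and only if T = T(S) for some simple A-module S; moreover T(S) = T(S') for simple modules S and S' if and only if S and S' are isomorphic. -/
/-! Preamble: the category `mod A` of finite-dimensional right `A`-modules,
torsion(-free) classes, the complete lattice `tors A`, functorially finite
torsion classes, bricks, etc. -/

open Function

/-! For a simple module `S`, the modules all of whose simple quotients are isomorphic to `S`
form a torsion class (a simple quotient of an extension is a quotient of the submodule or of the
quotient), so every simple module in `T(S)` is isomorphic to `S`. Every nonzero torsion class
contains a simple module, a simple quotient of any nonzero module in it. Hence `T(S)` is an atom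
of `tors A`, and every atom is `T(S)` for any simple `S` it contains. -/

theorem LinearMap.exists_comp_eq_of_ker_le_s18 {R M N P : Type*} [Ring R] [AddCommGroup M]
    [AddCommGroup N] [AddCommGroup P] [Module R M] [Module R N] [Module R P]
    {g : M →ₗ[R] N} (hg : Surjective g) {h : M →ₗ[R] P} (hle : ker g ≤ ker h) :
    ∃ h' : N →ₗ[R] P, h' ∘ₗ g = h :=
  ⟨(ker g).liftQ h hle ∘ₗ (g.quotKerEquivOfSurjective hg).symm.toLinearMap, by
    ext x
    simp⟩

variable {A : Type} [Ring A]

namespace ModA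

theorem exists_surjective_isSimpleModule (M : ModA A) [Nontrivial M.carrier] :
    ∃ (P : ModA A) (g : M.carrier →ₗ[Aᵐᵒᵖ] P.carrier),
      IsSimpleModule Aᵐᵒᵖ P.carrier ∧ Surjective g := by
  obtain ⟨N, hN⟩ := IsCoatomic.exists_coatom (Submodule Aᵐᵒᵖ M.carrier)
  exact ⟨⟨M.carrier ⧸ N⟩, N.mkQ, isSimpleModule_iff_isCoatom.mpr hN, N.mkQ_surjective⟩

end ModA

theorem isTorsionClass_subsingleton :
    IsTorsionClass {M : ModA A | Subsingleton M.carrier} := by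
  refine ⟨fun _ h => h, fun M N (hM : Subsingleton M) f hf => hf.subsingleton,
    fun X Y Z f g hf _ he (hX : Subsingleton X) (hZ : Subsingleton Z) => ⟨fun y y' => ?_⟩⟩
  have hrange (y : Y.carrier) : y = 0 := by
    obtain ⟨x, rfl⟩ : y ∈ LinearMap.range f := he ▸ Subsingleton.elim (g y) 0
    rw [Subsingleton.elim x 0, map_zero]
  rw [hrange y, hrange y']

namespace Tors

theorem torsGen_le_iff {C : Set (ModA A)} {T : Tors A} : torsGen C ≤ T ↔ C ⊆ T.1 :=
  ⟨fun h _ hM => h (Set.mem_sInter.mpr fun _ ⟨_, hU, hUt⟩ => hUt ▸ hU hM), fun h => sInf_le h⟩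

theorem subset_torsGen (C : Set (ModA A)) : C ⊆ (torsGen C).1 :=
  torsGen_le_iff.mp le_rfl

theorem torsGen_singleton_le_iff {S : ModA A} {T : Tors A} : torsGen {S} ≤ T ↔ S ∈ T.1 :=
  torsGen_le_iff.trans Set.singleton_subset_iff

theorem val_bot : (⊥ : Tors A).1 = {M : ModA A | Subsingleton M.carrier} :=
  le_antisymm (bot_le (a := show Tors A from ⟨_, isTorsionClass_subsingleton⟩))
    fun M hM => (⊥ : Tors A).2.1 M hM

theorem exists_isSimpleModule_mem {T : Tors A} (hT : T ≠ ⊥) :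
    ∃ S ∈ T.1, IsSimpleModule Aᵐᵒᵖ S.carrier := by
  obtain ⟨M, hMT, hM⟩ : ∃ M ∈ T.1, ¬Subsingleton M.carrier := by
    by_contra! h
    exact hT (le_antisymm (fun M hM => val_bot (A := A) ▸ h M hM) bot_le)
  have : Nontrivial M.carrier := not_subsingleton_iff_nontrivial.mp hM
  obtain ⟨P, g, hP, hg⟩ := M.exists_surjective_isSimpleModule
  exact ⟨P, T.mem_of_surjective hMT hg, hP⟩

theorem torsGen_singleton_ne_bot {S : ModA A} (hS : IsSimpleModule Aᵐᵒᵖ S.carrier) :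
    torsGen {S} ≠ ⊥ := fun h => by
  have := hS
  have := IsSimpleModule.nontrivial Aᵐᵒᵖ S.carrier
  have hS0 : S ∈ (⊥ : Tors A).1 := h ▸ subset_torsGen {S} rfl
  rw [val_bot] at hS0
  exact not_subsingleton S.carrier hS0

end Tors

def SimpleQuotientsIso (S : ModA A) : Set (ModA A) :=
  {M | ∀ (P : ModA A) (g : M.carrier →ₗ[Aᵐᵒᵖ] P.carrier), IsSimpleModule Aᵐᵒᵖ P.carrier →
    Surjective g → Nonempty (P.carrier ≃ₗ[Aᵐᵒᵖ] S.carrier)}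

theorem isTorsionClass_simpleQuotientsIso (S : ModA A) :
    IsTorsionClass (SimpleQuotientsIso S) := by
  refine ⟨fun N hN P g hP hg => ?_, fun M N hM f hf P g hP hg => hM P (g ∘ₗ f) hP (hg.comp hf),
    fun X Y Z f g _ hg he hX hZ P h hP hh => ?_⟩
  · have := hP
    have := IsSimpleModule.nontrivial Aᵐᵒᵖ P.carrier
    exact absurd hg.subsingleton (not_subsingleton P.carrier)
  · have := hP
    by_cases hhf : h ∘ₗ f = 0
    · have hle : LinearMap.ker g ≤ LinearMap.ker h := by
        rw [← he]
        rintro _ ⟨x, rfl⟩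
        exact LinearMap.congr_fun hhf x
      obtain ⟨h', rfl⟩ := LinearMap.exists_comp_eq_of_ker_le_s18 hg hle
      exact hZ P h' hP (Surjective.of_comp hh)
    · exact hX P (h ∘ₗ f) hP (LinearMap.surjective_of_ne_zero hhf)

theorem mem_simpleQuotientsIso_self {S : ModA A} (hS : IsSimpleModule Aᵐᵒᵖ S.carrier) :
    S ∈ SimpleQuotientsIso S := fun P g hP hg => by
  have := hS
  have := hP
  have := IsSimpleModule.nontrivial Aᵐᵒᵖ P.carrier
  exact ⟨(LinearEquiv.ofBijective g ⟨LinearMap.injective_of_ne_zero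
    (LinearMap.ne_zero_of_surjective hg), hg⟩).symm⟩

theorem nonempty_linearEquiv_of_mem_torsGen_singleton {S P : ModA A}
    (hS : IsSimpleModule Aᵐᵒᵖ S.carrier) (hP : IsSimpleModule Aᵐᵒᵖ P.carrier)
    (hPS : P ∈ (torsGen {S}).1) : Nonempty (P.carrier ≃ₗ[Aᵐᵒᵖ] S.carrier) := by
  have hsub : torsGen {S} ≤ ⟨_, isTorsionClass_simpleQuotientsIso S⟩ :=
    Tors.torsGen_singleton_le_iff.mpr (mem_simpleQuotientsIso_self hS)
  exact hsub hPS P LinearMap.id hP surjective_id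

theorem torsGen_singleton_eq_of_linearEquiv {S S' : ModA A} (e : S.carrier ≃ₗ[Aᵐᵒᵖ] S'.carrier) :
    torsGen ({S} : Set (ModA A)) = torsGen {S'} := by
  have key {M N : ModA A} (e : M.carrier ≃ₗ[Aᵐᵒᵖ] N.carrier) : torsGen {N} ≤ torsGen {M} :=
    Tors.torsGen_singleton_le_iff.mpr
      ((torsGen {M}).mem_of_surjective (Tors.subset_torsGen _ rfl) e.surjective)
  exact le_antisymm (key e.symm) (key e)

theorem isAtom_torsGen_singleton {S : ModA A} (hS : IsSimpleModule Aᵐᵒᵖ S.carrier) :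
    IsAtom (torsGen {S}) := by
  refine ⟨Tors.torsGen_singleton_ne_bot hS, fun U hU => by_contra fun hU0 => ?_⟩
  obtain ⟨P, hPU, hP⟩ := Tors.exists_isSimpleModule_mem hU0
  obtain ⟨e⟩ := nonempty_linearEquiv_of_mem_torsGen_singleton hS hP (hU.le hPU)
  exact hU.not_ge (Tors.torsGen_singleton_le_iff.mpr (U.mem_of_surjective hPU e.surjective))

theorem eq_torsGen_singleton_of_isAtom {T : Tors A} (hT : IsAtom T) :
    ∃ S : ModA A, IsSimpleModule Aᵐᵒᵖ S.carrier ∧ T = torsGen {S} := by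
  obtain ⟨S, hST, hS⟩ := Tors.exists_isSimpleModule_mem hT.1
  exact ⟨S, hS, (hT.le_iff.mp (Tors.torsGen_singleton_le_iff.mpr hST)).resolve_left
    (Tors.torsGen_singleton_ne_bot hS) |>.symm⟩

theorem stmt18_general (A : Type) [Ring A]
    (Z : Tors A) (hZ : Z.1 = {M : ModA A | Subsingleton M.carrier}) :
    (∀ T : Tors A, Z ⋖ T ↔
      ∃ S : ModA A, IsSimpleModule Aᵐᵒᵖ S.carrier ∧ T = torsGen {S}) ∧
    (∀ S S' : ModA A, IsSimpleModule Aᵐᵒᵖ S.carrier → IsSimpleModule Aᵐᵒᵖ S'.carrier →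
      (torsGen ({S} : Set (ModA A)) = torsGen {S'} ↔
        Nonempty (S.carrier ≃ₗ[Aᵐᵒᵖ] S'.carrier))) := by
  obtain rfl : Z = ⊥ := Subtype.ext (hZ.trans Tors.val_bot.symm)
  refine ⟨fun T => bot_covBy_iff.trans ⟨eq_torsGen_singleton_of_isAtom, ?_⟩,
    fun S S' hS hS' => ⟨fun h => ?_, fun ⟨e⟩ => torsGen_singleton_eq_of_linearEquiv e⟩⟩
  · rintro ⟨S, hS, rfl⟩
    exact isAtom_torsGen_singleton hS
  · exact nonempty_linearEquiv_of_mem_torsGen_singleton hS' hS (h ▸ Tors.subset_torsGen _ rfl)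

/-- a torsion class covers the zero torsion class `0` iff it is `T(S)`
for a simple module `S`; and `T(S) = T(S')` for simples `S, S'` iff `S ≅ S'`. -/
theorem stmt18 (K A : Type) [Field K] [IsAlgClosed K] [Ring A] [Algebra K A]
    [FiniteDimensional K A]
    (Z : Tors A) (hZ : Z.1 = {M : ModA A | Subsingleton M.carrier}) :
    (∀ T : Tors A, Z ⋖ T ↔
      ∃ S : ModA A, IsSimpleModule Aᵐᵒᵖ S.carrier ∧ T = torsGen {S}) ∧
    (∀ S S' : ModA A, IsSimpleModule Aᵐᵒᵖ S.carrier → IsSimpleModule Aᵐᵒᵖ S'.carrier →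
      (torsGen ({S} : Set (ModA A)) = torsGen {S'} ↔
        Nonempty (S.carrier ≃ₗ[Aᵐᵒᵖ] S'.carrier))) :=
  stmt18_general A Z hZ
end
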